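/- Let m_1 > 0 and suppose u is m_1-strongly concave on Ω_1. Then for every Z ⊆ V: Σ_{a ∈ Z} f({a}) ≤ (1/(2m_1))·‖(∇u(0))_Z‖². -/

import Mathlib

open scoped RealInnerProductSpace

/-- The support of a vector, as a finset. -/
noncomputable def suppF {V : Type*} [Fintype V] [DecidableEq V]
    (w : EuclideanSpace ℝ V) : Finset V :=
  Finset.univ.filter fun a => w a ≠ 0

/-- The restriction `w_S` of a vector `w` to a set `S` of coordinates:
it agrees with `w` on `S` and is zero elsewhere. -/
noncomputable def restr {V : Type*} [Fintype V] [DecidableEq V]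
    (w : EuclideanSpace ℝ V) (S : Finset V) : EuclideanSpace ℝ V :=
  WithLp.toLp 2 fun a => if a ∈ S then w a else 0

/- Since `w {a}` is supported on `{a}`, it equals `t • e_a` for some `t`, and strong concavity
between `0` and `w {a}` bounds the gain `u (w {a}) - u 0` by `g a * t - (m₁ / 2) t²` with
`g = ∇u(0)`. This concave quadratic in `t` is at most `(g a)² / (2 m₁)`; summing over `a ∈ Z`
gives `‖g_Z‖² / (2 m₁)`. -/

section Support

variable {V : Type*} [Fintype V] [DecidableEq V]

@[simp]
lemma suppF_zero : suppF (0 : EuclideanSpace ℝ V) = ∅ := by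
  simp [suppF]

@[simp]
lemma suppF_neg (y : EuclideanSpace ℝ V) : suppF (-y) = suppF y := by
  ext i; simp [suppF]

lemma eq_single_of_suppF_subset_singleton {y : EuclideanSpace ℝ V} {a : V}
    (h : suppF y ⊆ {a}) : y = EuclideanSpace.single a (y a) := by
  ext i
  by_cases hi : i = a
  · subst hi; simp
  · have : i ∉ suppF y := fun hy => hi (Finset.mem_singleton.mp (h hy))
    simp_all [suppF]

lemma norm_restr_sq (v : EuclideanSpace ℝ V) (S : Finset V) :
    ‖restr v S‖ ^ 2 = ∑ a ∈ S, v a ^ 2 := by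
  simp [EuclideanSpace.norm_sq_eq, restr, ite_pow, Finset.sum_ite_mem]

end Support

lemma mul_sub_half_mul_sq_le {m : ℝ} (hm : 0 < m) (g t : ℝ) :
    g * t - m / 2 * t ^ 2 ≤ 1 / (2 * m) * g ^ 2 := by
  rw [← sub_nonneg]
  have : 1 / (2 * m) * g ^ 2 - (g * t - m / 2 * t ^ 2) = (m * t - g) ^ 2 / (2 * m) := by
    field_simp; ring
  rw [this]; positivity

lemma sub_le_of_strongConcave_single {V : Type*} [Fintype V] [DecidableEq V]
    {m : ℝ} (hm : 0 < m) {u : EuclideanSpace ℝ V → ℝ} {a : V} {t : ℝ}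
    (hconc : u (EuclideanSpace.single a t) - u 0 - ⟪gradient u 0, EuclideanSpace.single a t⟫
      ≤ -(m / 2) * ‖EuclideanSpace.single a t‖ ^ 2) :
    u (EuclideanSpace.single a t) - u 0 ≤ 1 / (2 * m) * gradient u 0 a ^ 2 := by
  rw [EuclideanSpace.inner_single_right, RCLike.conj_to_real, PiLp.norm_single, Real.norm_eq_abs,
    sq_abs] at hconc
  linarith [mul_sub_half_mul_sq_le hm (gradient u 0 a) t]

theorem stmt16_general {V : Type*} [Fintype V] [DecidableEq V]
    (m1 : ℝ) (hm1 : 0 < m1)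
    (u : EuclideanSpace ℝ V → ℝ)
    (hconc : ∀ x y : EuclideanSpace ℝ V,
      (suppF x).card ≤ 1 → (suppF y).card ≤ 1 → (suppF (x - y)).card ≤ 1 →
      u y - u x - ⟪gradient u x, y - x⟫ ≤ -(m1 / 2) * ‖y - x‖ ^ 2)
    (w : Finset V → EuclideanSpace ℝ V)
    (hw_supp : ∀ Z : Finset V, suppF (w Z) ⊆ Z)
    (Z : Finset V) :
    ∑ a ∈ Z, (u (w {a}) - u 0) ≤ (1 / (2 * m1)) * ‖restr (gradient u 0) Z‖ ^ 2 := by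
  rw [norm_restr_sq, Finset.mul_sum]
  refine Finset.sum_le_sum fun a _ => ?_
  have hcard : (suppF (w {a})).card ≤ 1 :=
    (Finset.card_le_card (hw_supp {a})).trans (Finset.card_singleton a).le
  have hsingle := eq_single_of_suppF_subset_singleton (hw_supp {a})
  have hconc_a := hconc 0 (w {a}) (by simp) hcard (by simpa using hcard)
  rw [sub_zero, hsingle] at hconc_a
  rw [hsingle]
  exact sub_le_of_strongConcave_single hm1 hconc_a

/-- if `u` is `m₁`-strongly concave on `Ω_1` then for every `Z`,
`∑_{a ∈ Z} f({a}) ≤ (1/(2 m₁))‖(∇u(0))_Z‖²`. -/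
theorem stmt16 {V : Type*} [Fintype V] [DecidableEq V]
    (m1 : ℝ) (hm1 : 0 < m1)
    (u : EuclideanSpace ℝ V → ℝ) (hu : Differentiable ℝ u)
    (hconc : ∀ x y : EuclideanSpace ℝ V,
      (suppF x).card ≤ 1 → (suppF y).card ≤ 1 → (suppF (x - y)).card ≤ 1 →
      u y - u x - ⟪gradient u x, y - x⟫ ≤ -(m1 / 2) * ‖y - x‖ ^ 2)
    (w : Finset V → EuclideanSpace ℝ V)
    (hw_supp : ∀ Z : Finset V, suppF (w Z) ⊆ Z)
    (hw_max : ∀ Z : Finset V, ∀ z : EuclideanSpace ℝ V, suppF z ⊆ Z → u z ≤ u (w Z))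
    (hw_grad : ∀ Z : Finset V, ∀ a ∈ Z, gradient u (w Z) a = 0)
    (Z : Finset V) :
    ∑ a ∈ Z, (u (w {a}) - u 0) ≤ (1 / (2 * m1)) * ‖restr (gradient u 0) Z‖ ^ 2 :=
  stmt16_general m1 hm1 u hconc w hw_supp Z
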